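/- Let λ > 0 and r ∈ ℝ satisfy |r| ≤ t_{1/2,λ} = (54^{1/3}/4)·λ^{2/3}. Then β = 0 is a global minimizer over β ∈ ℝ of the function β ↦ (β − r)² + λ|β|^{1/2}; that is, for every β ∈ ℝ, r² ≤ (β − r)² + λ|β|^{1/2}. -/
import Mathlib


/-- The threshold value `t_{1/2,λ} = (54^{1/3}/4)·λ^{2/3}`. -/
noncomputable def t12 (lam : ℝ) : ℝ :=
  (54 : ℝ) ^ ((1 : ℝ) / 3) / 4 * lam ^ ((2 : ℝ) / 3)

theorem stmt_1 (lam r : ℝ) (hlam : 0 < lam) (hr : |r| ≤ t12 lam) :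
    ∀ β : ℝ, r ^ 2 ≤ (β - r) ^ 2 + lam * |β| ^ ((1 : ℝ) / 2) := by
  intro β
  set a : ℝ := lam ^ ((1 : ℝ) / 3) with ha_def
  set c : ℝ := (54 : ℝ) ^ ((1 : ℝ) / 3) with hc_def
  have ha : 0 < a := Real.rpow_pos_of_pos hlam _
  have hc : 0 < c := Real.rpow_pos_of_pos (by norm_num) _
  have ha3 : a ^ 3 = lam := by
    rw [ha_def, ← Real.rpow_natCast (lam ^ ((1:ℝ)/3)) 3, ← Real.rpow_mul hlam.le]
    norm_num
  have hc3 : c ^ 3 = 54 := by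
    rw [hc_def, ← Real.rpow_natCast ((54:ℝ) ^ ((1:ℝ)/3)) 3,
      ← Real.rpow_mul (by norm_num : (0:ℝ) ≤ 54)]
    norm_num
  have hlam23 : lam ^ ((2 : ℝ) / 3) = a ^ 2 := by
    rw [ha_def, ← Real.rpow_natCast (lam ^ ((1:ℝ)/3)) 2, ← Real.rpow_mul hlam.le]
    norm_num
  set s : ℝ := Real.sqrt |β| with hs_def
  have hs : 0 ≤ s := Real.sqrt_nonneg _
  have hs2 : s ^ 2 = |β| := Real.sq_sqrt (abs_nonneg β)
  have hrpow : |β| ^ ((1 : ℝ) / 2) = s := by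
    rw [hs_def, Real.sqrt_eq_rpow]
  have ht : t12 lam = c / 4 * a ^ 2 := by
    rw [t12, hlam23]
  have hrβ : 2 * r * β ≤ 2 * (c / 4 * a ^ 2) * s ^ 2 := by
    have h1 : 2 * r * β ≤ 2 * |r| * |β| := by
      have := abs_mul r β
      have h2 : r * β ≤ |r| * |β| := (le_abs_self _).trans (le_of_eq (abs_mul r β))
      nlinarith
    have h3 : 2 * |r| * |β| ≤ 2 * (c / 4 * a ^ 2) * |β| := by
      have := hr
      rw [ht] at this
      nlinarith [abs_nonneg β]
    rw [hs2]; linarith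
  rw [hrpow]
  have hβ2 : β ^ 2 = s ^ 2 * s ^ 2 := by rw [hs2, abs_mul_abs_self]; ring
  have key : 0 ≤ s * (c * s - 3 * a) ^ 2 * (c * s + 6 * a) :=
    mul_nonneg (mul_nonneg hs (sq_nonneg _)) (by positivity)
  nlinarith [key, hc3, ha3, sq_nonneg s, mul_pos ha hc]
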